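/- arXiv:1310.1110 — 2 statements merged into one kernel-verified Lean document; each statement's English description precedes it below -/
import Mathlib

section
/- Let ρ_AB, ρ_BC, ρ_AC be compatible with a tripartite state ρ_ABC, and suppose ρ_AB has the form ρ_AB = Σ_i p_i |a_i⟩⟨a_i| ⊗ ρ_i for an orthonormal basis {|a_i⟩} of H_A and states ρ_i on H_B (with p_i ≥ 0, Σ p_i = 1). Then the triple is also compatible with the state σ_ABC = Σ_i (|a_i⟩⟨a_i| ⊗ I_{BC}) ρ_ABC (|a_i⟩⟨a_i| ⊗ I_{BC}), which is separable across the cut A:BC (hence biseparable). -/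
open Matrix BigOperators
open scoped Kronecker ComplexOrder

namespace QMarginal

abbrev Mat (n : ℕ) := Matrix (Fin n) (Fin n) ℂ
abbrev Bip (m n : ℕ) := Matrix (Fin m × Fin n) (Fin m × Fin n) ℂ
abbrev Tri (dA dB dC : ℕ) := Matrix (Fin dA × Fin dB × Fin dC) (Fin dA × Fin dB × Fin dC) ℂ

/-- partial trace over the third system -/
noncomputable def trC {dA dB dC : ℕ} (ρ : Tri dA dB dC) : Bip dA dB :=
  fun x y => ∑ c : Fin dC, ρ (x.1, x.2, c) (y.1, y.2, c)

/-- partial trace over the second system -/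
noncomputable def trB {dA dB dC : ℕ} (ρ : Tri dA dB dC) : Bip dA dC :=
  fun x y => ∑ b : Fin dB, ρ (x.1, b, x.2) (y.1, b, y.2)

/-- partial trace over the first system -/
noncomputable def trA {dA dB dC : ℕ} (ρ : Tri dA dB dC) : Bip dB dC :=
  fun x y => ∑ a : Fin dA, ρ (a, x.1, x.2) (a, y.1, y.2)

/-- partial trace of a bipartite matrix over the right factor -/
noncomputable def trR {m n : ℕ} (ρ : Bip m n) : Mat m :=
  fun i j => ∑ b : Fin n, ρ (i, b) (j, b)

/-- partial trace of a bipartite matrix over the left factor -/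
noncomputable def trL {m n : ℕ} (ρ : Bip m n) : Mat n :=
  fun i j => ∑ a : Fin m, ρ (a, i) (a, j)

def IsDensity {ι : Type*} [Fintype ι] [DecidableEq ι] (ρ : Matrix ι ι ℂ) : Prop :=
  ρ.PosSemidef ∧ ρ.trace = 1

/-- rank-one projector onto a vector -/
def projV {ι : Type*} (v : ι → ℂ) : Matrix ι ι ℂ := fun i j => v i * star (v j)

def prod2 {m n : ℕ} (v : Fin m → ℂ) (w : Fin n → ℂ) : Fin m × Fin n → ℂ :=
  fun x => v x.1 * w x.2

def prod3 {dA dB dC : ℕ} (u : Fin dA → ℂ) (v : Fin dB → ℂ) (w : Fin dC → ℂ) :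
    Fin dA × Fin dB × Fin dC → ℂ :=
  fun x => u x.1 * v x.2.1 * w x.2.2

/-- a family of vectors forming an orthonormal basis -/
def ONB {n : ℕ} (a : Fin n → Fin n → ℂ) : Prop :=
  ∀ i j, (∑ k, star (a i k) * a j k) = if i = j then (1:ℂ) else 0

/-- fully classical bipartite state -/
def FullyClassical {m n : ℕ} (ρ : Bip m n) : Prop :=
  ∃ (a : Fin m → Fin m → ℂ) (b : Fin n → Fin n → ℂ) (p : Fin m → Fin n → ℝ),
    ONB a ∧ ONB b ∧ (∀ i j, 0 ≤ p i j) ∧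
    ρ = ∑ i, ∑ j, (p i j) • projV (prod2 (a i) (b j))

/-- fully classical tripartite state -/
def FullyClassicalTri {dA dB dC : ℕ} (ρ : Tri dA dB dC) : Prop :=
  ∃ (a : Fin dA → Fin dA → ℂ) (b : Fin dB → Fin dB → ℂ) (c : Fin dC → Fin dC → ℂ)
    (f : Fin dA → Fin dB → Fin dC → ℝ),
    ONB a ∧ ONB b ∧ ONB c ∧ (∀ i j k, 0 ≤ f i j k) ∧
    ρ = ∑ i, ∑ j, ∑ k, (f i j k) • projV (prod3 (a i) (b j) (c k))

/-- fully separable tripartite state -/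
def FullySepTri {dA dB dC : ℕ} (ρ : Tri dA dB dC) : Prop :=
  ∃ (N : ℕ) (p : Fin N → ℝ) (u : Fin N → Fin dA → ℂ) (v : Fin N → Fin dB → ℂ)
    (w : Fin N → Fin dC → ℂ),
    (∀ i, 0 ≤ p i) ∧ ρ = ∑ i, (p i) • projV (prod3 (u i) (v i) (w i))

/-- M ⊗ I_C on the tripartite space, M acting on A ⊗ B -/
def embAB {dA dB : ℕ} (M : Bip dA dB) (dC : ℕ) : Tri dA dB dC :=
  fun x y => M (x.1, x.2.1) (y.1, y.2.1) * (if x.2.2 = y.2.2 then 1 else 0)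

/-- M ⊗ I_B on the tripartite space, M acting on A ⊗ C -/
def embAC {dA dC : ℕ} (M : Bip dA dC) (dB : ℕ) : Tri dA dB dC :=
  fun x y => M (x.1, x.2.2) (y.1, y.2.2) * (if x.2.1 = y.2.1 then 1 else 0)

/-- M ⊗ I_A on the tripartite space, M acting on B ⊗ C -/
def embBC {dB dC : ℕ} (M : Bip dB dC) (dA : ℕ) : Tri dA dB dC :=
  fun x y => M (x.2.1, x.2.2) (y.2.1, y.2.2) * (if x.1 = y.1 then 1 else 0)

/-- M ⊗ I_BC on the tripartite space, M acting on A -/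
def embA {dA dB dC : ℕ} (M : Mat dA) : Tri dA dB dC :=
  fun x y => M x.1 y.1 * (if x.2 = y.2 then 1 else 0)

/-- separability across the cut A : BC -/
def SepA_BC {dA dB dC : ℕ} (σ : Tri dA dB dC) : Prop :=
  ∃ (N : ℕ) (p : Fin N → ℝ) (a : Fin N → Fin dA → ℂ)
    (ψ : Fin N → (Fin dB × Fin dC → ℂ)),
    (∀ i, 0 ≤ p i) ∧
    σ = ∑ i, (p i) • projV (fun z : Fin dA × Fin dB × Fin dC => a i z.1 * ψ i z.2)


/-!
Write `P i = |a i⟩⟨a i|` and let `Φ X = ∑ i, (P i ⊗ 1) X (P i ⊗ 1)` be the pinching on `A`.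
It preserves positivity, and since `P i * P j = δ i j • P i` and `∑ i, P i = 1`, it leaves the
trace and (by cyclicity of `trA` under operators acting on `A`) the marginal on `BC` unchanged.
The partial traces over `B` and `C` turn `Φ` into the pinching on `AB`, resp. `AC`, which fixes
block-diagonal operators `∑ j, c j • P j ⊗ Y j`: this is where the classical-quantum form of
`ρ_AB` and `ρ_AC` enters. Finally, writing `ρ = ∑ k, |w k⟩⟨w k|`, every `(P i ⊗ 1) |w k⟩` is
a product vector `|a i⟩ ⊗ ψ`, so `Φ ρ` is separable across `A : BC`.
-/

theorem projV_eq_vecMulVec {ι : Type*} (v : ι → ℂ) : projV v = vecMulVec v (star v) := rfl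

theorem conjTranspose_projV {ι : Type*} (v : ι → ℂ) : (projV v)ᴴ = projV v := by
  ext x y
  simp [projV, mul_comm]

theorem mul_projV_mul_conjTranspose {ι κ : Type*} [Fintype ι] (M : Matrix κ ι ℂ) (v : ι → ℂ) :
    M * projV v * Mᴴ = projV (M *ᵥ v) := by
  rw [projV_eq_vecMulVec, projV_eq_vecMulVec, mul_vecMulVec, vecMulVec_mul, star_mulVec]

theorem ONB.projV_mul_projV {n : ℕ} {a : Fin n → Fin n → ℂ} (ha : ONB a) (i j : Fin n) :
    projV (a i) * projV (a j) = if i = j then projV (a i) else 0 := by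
  rw [projV_eq_vecMulVec, projV_eq_vecMulVec, vecMulVec_mul_vecMulVec,
    show star (a i) ⬝ᵥ a j = _ from ha i j]
  split_ifs with h
  · simp [h]
  · simp

theorem ONB.sum_projV {n : ℕ} {a : Fin n → Fin n → ℂ} (ha : ONB a) : ∑ i, projV (a i) = 1 := by
  have hrows : (Matrix.of a).map star * (Matrix.of a)ᵀ = 1 := by
    ext i j
    simpa [mul_apply, one_apply] using ha i j
  rw [← mul_eq_one_comm.mp hrows]
  ext x y
  simp [projV, Matrix.sum_apply, mul_apply]

noncomputable def pinchL {m n : ℕ} (a : Fin m → Fin m → ℂ) (Y : Bip m n) : Bip m n :=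
  ∑ i, (projV (a i) ⊗ₖ (1 : Mat n)) * Y * (projV (a i) ⊗ₖ (1 : Mat n))

theorem ONB.pinchL_sum_smul_kronecker {m n : ℕ} {a : Fin m → Fin m → ℂ} (ha : ONB a)
    (c : Fin m → ℝ) (Y : Fin m → Mat n) :
    pinchL a (∑ j, c j • (projV (a j) ⊗ₖ Y j)) = ∑ j, c j • (projV (a j) ⊗ₖ Y j) := by
  have hblock : ∀ i j, (projV (a i) ⊗ₖ (1 : Mat n)) * (projV (a j) ⊗ₖ Y j) *
      (projV (a i) ⊗ₖ (1 : Mat n)) = if i = j then projV (a j) ⊗ₖ Y j else 0 := by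
    intro i j
    rw [← mul_kronecker_mul, ← mul_kronecker_mul, ha.projV_mul_projV]
    split_ifs with h
    · rw [h, ha.projV_mul_projV, if_pos rfl, one_mul, mul_one]
    · simp
  simp only [pinchL, Matrix.mul_sum, Matrix.sum_mul, mul_smul_comm, smul_mul_assoc, hblock,
    smul_ite, smul_zero]
  rw [Finset.sum_comm]
  simp

section Tripartite

variable {dA dB dC : ℕ}

theorem embA_eq_kronecker (M : Mat dA) : (embA M : Tri dA dB dC) = M ⊗ₖ 1 := by
  ext x y
  simp [embA, kroneckerMap_apply, one_apply]

theorem embA_mul (M N : Mat dA) :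
    (embA M : Tri dA dB dC) * embA N = embA (M * N) := by
  simp only [embA_eq_kronecker, ← mul_kronecker_mul, mul_one]

theorem embA_one : (embA 1 : Tri dA dB dC) = 1 := by
  rw [embA_eq_kronecker, one_kronecker_one]

theorem embA_sum {ι : Type*} (s : Finset ι) (M : ι → Mat dA) :
    (embA (∑ i ∈ s, M i) : Tri dA dB dC) = ∑ i ∈ s, embA (M i) := by
  ext x y
  simp [embA, Matrix.sum_apply]

theorem conjTranspose_embA (M : Mat dA) : (embA M : Tri dA dB dC)ᴴ = embA Mᴴ := by
  simp only [embA_eq_kronecker, conjTranspose_kronecker, conjTranspose_one]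

theorem trA_sum {ι : Type*} (s : Finset ι) (X : ι → Tri dA dB dC) :
    trA (∑ i ∈ s, X i) = ∑ i ∈ s, trA (X i) := by
  ext x y
  simp only [trA, Matrix.sum_apply]
  exact Finset.sum_comm

theorem trB_sum {ι : Type*} (s : Finset ι) (X : ι → Tri dA dB dC) :
    trB (∑ i ∈ s, X i) = ∑ i ∈ s, trB (X i) := by
  ext x y
  simp only [trB, Matrix.sum_apply]
  exact Finset.sum_comm

theorem trC_sum {ι : Type*} (s : Finset ι) (X : ι → Tri dA dB dC) :
    trC (∑ i ∈ s, X i) = ∑ i ∈ s, trC (X i) := by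
  ext x y
  simp only [trC, Matrix.sum_apply]
  exact Finset.sum_comm

theorem trA_embA_mul_comm (M : Mat dA) (X : Tri dA dB dC) :
    trA (embA M * X) = trA (X * embA M) := by
  ext x y
  simp only [trA, Prod.mk.eta, mul_apply, embA, mul_ite, mul_one, mul_zero, ite_mul, zero_mul,
    Fintype.sum_prod_type, Finset.sum_ite_eq, Finset.mem_univ, ↓reduceIte, Finset.sum_ite_eq']
  rw [Finset.sum_comm]
  exact Finset.sum_congr rfl fun _ _ => Finset.sum_congr rfl fun _ _ => mul_comm _ _

theorem trC_embA_mul_mul (M N : Mat dA) (X : Tri dA dB dC) :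
    trC (embA M * X * embA N) = (M ⊗ₖ 1) * trC X * (N ⊗ₖ 1) := by
  ext x y
  simp only [trC, mul_apply, embA, mul_ite, mul_one, mul_zero, ite_mul, zero_mul,
    Fintype.sum_prod_type, Finset.sum_ite_eq, Finset.mem_univ, ↓reduceIte, Finset.sum_mul,
    mul_assoc, Finset.sum_ite_eq', kroneckerMap_apply, one_apply, Finset.mul_sum,
    Finset.sum_ite_irrel, Finset.sum_const_zero]
  rw [Finset.sum_comm]
  exact Finset.sum_congr rfl fun _ _ => Finset.sum_comm

theorem trB_embA_mul_mul (M N : Mat dA) (X : Tri dA dB dC) :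
    trB (embA M * X * embA N) = (M ⊗ₖ 1) * trB X * (N ⊗ₖ 1) := by
  ext x y
  simp only [trB, mul_apply, embA, mul_ite, mul_one, mul_zero, ite_mul, zero_mul,
    Fintype.sum_prod_type, Finset.sum_ite_eq, Finset.mem_univ, ↓reduceIte, Finset.sum_mul,
    mul_assoc, Finset.sum_ite_eq', kroneckerMap_apply, one_apply, Finset.mul_sum,
    Finset.sum_ite_irrel, Finset.sum_const_zero]
  rw [Finset.sum_comm]
  exact Finset.sum_congr rfl fun _ _ => Finset.sum_comm

theorem trace_trA (X : Tri dA dB dC) : (trA X).trace = X.trace := by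
  simp only [trace, diag, trA]
  exact Finset.sum_comm.trans (Fintype.sum_prod_type fun x => X x x).symm

noncomputable def pinchA (a : Fin dA → Fin dA → ℂ) (X : Tri dA dB dC) : Tri dA dB dC :=
  ∑ i, embA (projV (a i)) * X * embA (projV (a i))

theorem trA_pinchA {a : Fin dA → Fin dA → ℂ} (ha : ONB a) (X : Tri dA dB dC) :
    trA (pinchA a X) = trA X := by
  calc trA (pinchA a X) = ∑ i, trA (X * embA (projV (a i))) := by
        rw [pinchA, trA_sum]
        refine Finset.sum_congr rfl fun i _ => ?_
        rw [mul_assoc, trA_embA_mul_comm, mul_assoc, embA_mul, ha.projV_mul_projV, if_pos rfl]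
    _ = trA X := by
        rw [← trA_sum, ← Matrix.mul_sum, ← embA_sum, ha.sum_projV, embA_one, mul_one]

theorem trace_pinchA {a : Fin dA → Fin dA → ℂ} (ha : ONB a) (X : Tri dA dB dC) :
    (pinchA a X).trace = X.trace := by
  rw [← trace_trA, trA_pinchA ha, trace_trA]

theorem trC_pinchA (a : Fin dA → Fin dA → ℂ) (X : Tri dA dB dC) :
    trC (pinchA a X) = pinchL a (trC X) := by
  simp only [pinchA, pinchL, trC_sum, trC_embA_mul_mul]

theorem trB_pinchA (a : Fin dA → Fin dA → ℂ) (X : Tri dA dB dC) :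
    trB (pinchA a X) = pinchL a (trB X) := by
  simp only [pinchA, pinchL, trB_sum, trB_embA_mul_mul]

theorem posSemidef_pinchA (a : Fin dA → Fin dA → ℂ) {X : Tri dA dB dC} (hX : X.PosSemidef) :
    (pinchA a X).PosSemidef :=
  posSemidef_sum _ fun i _ => by
    simpa only [conjTranspose_embA, conjTranspose_projV] using
      hX.mul_mul_conjTranspose_same (embA (projV (a i)))

theorem embA_projV_mulVec (v : Fin dA → ℂ) (w : Fin dA × Fin dB × Fin dC → ℂ) :
    (embA (projV v) : Tri dA dB dC) *ᵥ w = fun z => v z.1 * ∑ s, star (v s) * w (s, z.2) := by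
  ext z
  simp [embA, projV, mulVec, dotProduct, Fintype.sum_prod_type, Finset.mul_sum, mul_assoc]

theorem sepA_BC_sum_projV {ι : Type*} [Fintype ι] (u : ι → Fin dA → ℂ)
    (ψ : ι → Fin dB × Fin dC → ℂ) :
    SepA_BC (∑ j, projV (fun z : Fin dA × Fin dB × Fin dC => u j z.1 * ψ j z.2)) := by
  let e := (Fintype.equivFin ι).symm
  refine ⟨Fintype.card ι, fun _ => 1, fun k => u (e k), fun k => ψ (e k), fun _ => zero_le_one, ?_⟩
  simp only [one_smul]
  exact (e.sum_comp fun j => projV fun z : Fin dA × Fin dB × Fin dC => u j z.1 * ψ j z.2).symm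

theorem sepA_BC_pinchA (a : Fin dA → Fin dA → ℂ) {X : Tri dA dB dC} (hX : X.PosSemidef) :
    SepA_BC (pinchA a X) := by
  obtain ⟨m, w, rfl⟩ := posSemidef_iff_eq_sum_vecMulVec.mp hX
  have hpinch : pinchA a (∑ k, projV (w k)) =
      ∑ ik : Fin dA × Fin m, projV (embA (projV (a ik.1)) *ᵥ w ik.2) := by
    simp only [pinchA, Matrix.mul_sum, Matrix.sum_mul, Fintype.sum_prod_type]
    refine Finset.sum_congr rfl fun i _ => Finset.sum_congr rfl fun k _ => ?_
    rw [← mul_projV_mul_conjTranspose, conjTranspose_embA, conjTranspose_projV]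
  rw [show ∑ k, vecMulVec (w k) (star (w k)) = ∑ k, projV (w k) from rfl, hpinch]
  simp only [embA_projV_mulVec]
  exact sepA_BC_sum_projV (fun ik : Fin dA × Fin m => a ik.1)
    fun ik y => ∑ s, star (a ik.1 s) * w ik.2 (s, y)

end Tripartite

theorem stmt_16_general {dA dB dC : ℕ} (ρABC : Tri dA dB dC) (hρ : IsDensity ρABC)
    (a : Fin dA → Fin dA → ℂ) (ha : ONB a)
    (p : Fin dA → ℝ)
    (ρi : Fin dA → Mat dB)
    (hAB : trC ρABC = ∑ i, (p i) • (projV (a i) ⊗ₖ ρi i))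
    (q : Fin dA → ℝ)
    (σi : Fin dA → Mat dC)
    (hAC : trB ρABC = ∑ i, (q i) • (projV (a i) ⊗ₖ σi i))
    (σABC : Tri dA dB dC)
    (hσ : σABC = ∑ i, embA (projV (a i)) * ρABC * embA (projV (a i))) :
    IsDensity σABC ∧ SepA_BC σABC ∧
    trC σABC = trC ρABC ∧ trB σABC = trB ρABC ∧ trA σABC = trA ρABC := by
  obtain rfl : σABC = pinchA a ρABC := hσ
  refine ⟨⟨posSemidef_pinchA a hρ.1, (trace_pinchA ha ρABC).trans hρ.2⟩,
    sepA_BC_pinchA a hρ.1, ?_, ?_, trA_pinchA ha ρABC⟩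
  · rw [trC_pinchA, hAB, ha.pinchL_sum_smul_kronecker]
  · rw [trB_pinchA, hAC, ha.pinchL_sum_smul_kronecker]

/-- if ρ_AB (and ρ_AC) are classical-quantum in the basis {|a_i⟩},
the pinching of the global state on A gives a biseparable state with the same
two-body reductions. -/
theorem stmt_16 {dA dB dC : ℕ} (ρABC : Tri dA dB dC) (hρ : IsDensity ρABC)
    (a : Fin dA → Fin dA → ℂ) (ha : ONB a)
    (p : Fin dA → ℝ) (hp : ∀ i, 0 ≤ p i) (hp1 : ∑ i, p i = 1)
    (ρi : Fin dA → Mat dB) (hρi : ∀ i, IsDensity (ρi i))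
    (hAB : trC ρABC = ∑ i, (p i) • (projV (a i) ⊗ₖ ρi i))
    (q : Fin dA → ℝ) (hq : ∀ i, 0 ≤ q i)
    (σi : Fin dA → Mat dC) (hσi : ∀ i, IsDensity (σi i))
    (hAC : trB ρABC = ∑ i, (q i) • (projV (a i) ⊗ₖ σi i))
    (σABC : Tri dA dB dC)
    (hσ : σABC = ∑ i, embA (projV (a i)) * ρABC * embA (projV (a i))) :
    IsDensity σABC ∧ SepA_BC σABC ∧
    trC σABC = trC ρABC ∧ trB σABC = trB ρABC ∧ trA σABC = trA ρABC :=
  stmt_16_general ρABC hρ a ha p ρi hAB q σi hAC σABC hσ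
end QMarginal
end

section
/- Let ρ_AB = ρ_BC = ρ_AC = p|00⟩⟨00| + (1−p)|a,a⟩⟨a,a| with |a⟩ = (|0⟩+|1⟩)/√2 and 0 < p < 1. Then the only tripartite density matrix on (C^2)^{⊗3} whose three bipartite reductions all equal this state is ρ_ABC = p|000⟩⟨000| + (1−p)|a,a,a⟩⟨a,a,a|; in particular the (separable, non-classical) reductions are compatible with a unique global state, which is fully separable. -/
open Matrix BigOperators
open scoped Kronecker ComplexOrder

namespace QMarginal

noncomputable def aVec : Fin 2 → ℂ := fun _ => (((Real.sqrt 2)⁻¹ : ℝ) : ℂ)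

def e0 : Fin 2 → ℂ := fun i => if i = 0 then 1 else 0

/-- the common bipartite marginal p|00⟩⟨00| + (1−p)|a,a⟩⟨a,a| -/
noncomputable def ρmarg (p : ℝ) : Bip 2 2 :=
  p • projV (prod2 e0 e0) + (1 - p) • projV (prod2 aVec aVec)

/-- the global state p|000⟩⟨000| + (1−p)|a,a,a⟩⟨a,a,a| -/
noncomputable def ρglob (p : ℝ) : Tri 2 2 2 :=
  p • projV (prod3 e0 e0 e0) + (1 - p) • projV (prod3 aVec aVec aVec)

/-!
`e_x - e_y` lies in the kernel of `ρmarg p` whenever `x, y ≠ |00⟩`, because `|00⟩` and `|a,a⟩`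
each have equal coordinates at `x` and `y`. For a positive semidefinite `τ` this kernel lifts
through the partial traces: `τ (e_{x,c} - e_{y,c}) = 0` from the `AB` marginal and
`τ (e_{c,x} - e_{c,y}) = 0` from the `BC` marginal. These identify all columns of `τ` at indices
`≠ |000⟩` and, `τ` being Hermitian, all such rows. A matrix of this shape is determined by its `AB`
marginal, and `ρglob p` has this shape and the prescribed marginals.
-/

section DiffForm

variable {ι : Type*}

def diffForm (A : Matrix ι ι ℂ) (i j : ι) : ℂ := A i i - A i j - A j i + A j j

variable [Fintype ι] [DecidableEq ι]

lemma diffForm_eq_dotProduct_mulVec (A : Matrix ι ι ℂ) (i j : ι) :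
    diffForm A i j =
      star (Pi.single i 1 - Pi.single j 1 : ι → ℂ) ⬝ᵥ A *ᵥ (Pi.single i 1 - Pi.single j 1) := by
  simp only [mulVec_sub, mulVec_single_one, star_sub, sub_dotProduct, dotProduct_sub,
    Pi.star_single, star_one, single_one_dotProduct, col_apply, diffForm]
  ring

lemma _root_.Matrix.PosSemidef.diffForm_nonneg {A : Matrix ι ι ℂ} (hA : A.PosSemidef) (i j : ι) :
    0 ≤ diffForm A i j := by
  rw [diffForm_eq_dotProduct_mulVec]
  exact hA.dotProduct_mulVec_nonneg _

lemma _root_.Matrix.PosSemidef.apply_eq_of_diffForm_eq_zero {A : Matrix ι ι ℂ}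
    (hA : A.PosSemidef) {i j : ι} (h : diffForm A i j = 0) (x : ι) : A x i = A x j := by
  rw [diffForm_eq_dotProduct_mulVec, hA.dotProduct_mulVec_zero_iff] at h
  simpa [mulVec_sub, mulVec_single_one, sub_eq_zero] using congrFun h x

end DiffForm

section PartialTrace

variable {dA dB dC : ℕ}

lemma diffForm_trC (τ : Tri dA dB dC) (i j : Fin dA × Fin dB) :
    diffForm (trC τ) i j = ∑ c, diffForm τ (i.1, i.2, c) (j.1, j.2, c) := by
  simp only [diffForm, trC, Finset.sum_add_distrib, Finset.sum_sub_distrib]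

lemma diffForm_trA (τ : Tri dA dB dC) (i j : Fin dB × Fin dC) :
    diffForm (trA τ) i j = ∑ a, diffForm τ (a, i.1, i.2) (a, j.1, j.2) := by
  simp only [diffForm, trA, Finset.sum_add_distrib, Finset.sum_sub_distrib]

lemma _root_.Matrix.PosSemidef.apply_eq_of_diffForm_trC_eq_zero {τ : Tri dA dB dC}
    (hτ : τ.PosSemidef) {i j : Fin dA × Fin dB} (h : diffForm (trC τ) i j = 0) (c : Fin dC)
    (x : Fin dA × Fin dB × Fin dC) : τ x (i.1, i.2, c) = τ x (j.1, j.2, c) := by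
  rw [diffForm_trC, Finset.sum_eq_zero_iff_of_nonneg fun c _ => hτ.diffForm_nonneg _ _] at h
  exact hτ.apply_eq_of_diffForm_eq_zero (h c (Finset.mem_univ c)) x

lemma _root_.Matrix.PosSemidef.apply_eq_of_diffForm_trA_eq_zero {τ : Tri dA dB dC}
    (hτ : τ.PosSemidef) {i j : Fin dB × Fin dC} (h : diffForm (trA τ) i j = 0) (a : Fin dA)
    (x : Fin dA × Fin dB × Fin dC) : τ x (a, i.1, i.2) = τ x (a, j.1, j.2) := by
  rw [diffForm_trA, Finset.sum_eq_zero_iff_of_nonneg fun a _ => hτ.diffForm_nonneg _ _] at h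
  exact hτ.apply_eq_of_diffForm_eq_zero (h a (Finset.mem_univ a)) x

lemma trC_add (τ σ : Tri dA dB dC) : trC (τ + σ) = trC τ + trC σ := by
  ext; simp [trC, Finset.sum_add_distrib]

lemma trB_add (τ σ : Tri dA dB dC) : trB (τ + σ) = trB τ + trB σ := by
  ext; simp [trB, Finset.sum_add_distrib]

lemma trA_add (τ σ : Tri dA dB dC) : trA (τ + σ) = trA τ + trA σ := by
  ext; simp [trA, Finset.sum_add_distrib]

lemma trC_sub (τ σ : Tri dA dB dC) : trC (τ - σ) = trC τ - trC σ := by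
  ext; simp [trC, Finset.sum_sub_distrib]

lemma trC_smul (r : ℝ) (τ : Tri dA dB dC) : trC (r • τ) = r • trC τ := by
  ext; simp [trC, Finset.smul_sum]

lemma trB_smul (r : ℝ) (τ : Tri dA dB dC) : trB (r • τ) = r • trB τ := by
  ext; simp [trB, Finset.smul_sum]

lemma trA_smul (r : ℝ) (τ : Tri dA dB dC) : trA (r • τ) = r • trA τ := by
  ext; simp [trA, Finset.smul_sum]

variable (u : Fin dA → ℂ) (v : Fin dB → ℂ) (w : Fin dC → ℂ)

lemma trC_projV_prod3 : trC (projV (prod3 u v w)) = (star w ⬝ᵥ w) • projV (prod2 u v) := by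
  ext
  simp only [trC, projV, prod3, prod2, dotProduct, Matrix.smul_apply, smul_eq_mul, Finset.sum_mul,
    star_mul', Pi.star_apply]
  exact Finset.sum_congr rfl fun _ _ => by ring

lemma trB_projV_prod3 : trB (projV (prod3 u v w)) = (star v ⬝ᵥ v) • projV (prod2 u w) := by
  ext
  simp only [trB, projV, prod3, prod2, dotProduct, Matrix.smul_apply, smul_eq_mul, Finset.sum_mul,
    star_mul', Pi.star_apply]
  exact Finset.sum_congr rfl fun _ _ => by ring

lemma trA_projV_prod3 : trA (projV (prod3 u v w)) = (star u ⬝ᵥ u) • projV (prod2 v w) := by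
  ext
  simp only [trA, projV, prod3, prod2, dotProduct, Matrix.smul_apply, smul_eq_mul, Finset.sum_mul,
    star_mul', Pi.star_apply]
  exact Finset.sum_congr rfl fun _ _ => by ring

lemma trace_projV_prod3 :
    (projV (prod3 u v w)).trace = (star u ⬝ᵥ u) * (star v ⬝ᵥ v) * (star w ⬝ᵥ w) := by
  simp only [trace, diag, projV, prod3, dotProduct, Fintype.sum_prod_type, star_mul',
    Pi.star_apply]
  rw [Finset.sum_mul_sum, Finset.sum_mul_sum]
  simp only [Finset.sum_mul]
  refine Finset.sum_congr rfl fun _ _ => ?_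
  rw [Finset.sum_comm]
  exact Finset.sum_congr rfl fun _ _ => Finset.sum_congr rfl fun _ _ => by ring

end PartialTrace

lemma star_e0_dotProduct_e0 : star e0 ⬝ᵥ e0 = 1 := by
  simp [dotProduct, e0]

lemma star_aVec_dotProduct_aVec : star aVec ⬝ᵥ aVec = 1 := by
  have h : ((Real.sqrt 2)⁻¹ * (Real.sqrt 2)⁻¹ : ℝ) = 1 / 2 := by
    rw [← mul_inv, Real.mul_self_sqrt zero_le_two, one_div]
  simp only [dotProduct, aVec, Pi.star_apply, Complex.star_def, Complex.conj_ofReal,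
    ← Complex.ofReal_mul, h, Fin.sum_univ_two]
  norm_num

lemma posSemidef_ρglob {p : ℝ} (hp : 0 ≤ p) (hp' : p ≤ 1) : (ρglob p).PosSemidef :=
  ((posSemidef_vecMulVec_self_star _).smul hp).add
    ((posSemidef_vecMulVec_self_star _).smul (sub_nonneg.mpr hp'))

lemma trace_ρglob (p : ℝ) : (ρglob p).trace = 1 := by
  rw [ρglob, trace_add, trace_smul, trace_smul, trace_projV_prod3, trace_projV_prod3,
    star_e0_dotProduct_e0, star_aVec_dotProduct_aVec]
  simp

lemma trC_ρglob (p : ℝ) : trC (ρglob p) = ρmarg p := by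
  rw [ρglob, trC_add, trC_smul, trC_smul, trC_projV_prod3, trC_projV_prod3,
    star_e0_dotProduct_e0, star_aVec_dotProduct_aVec, one_smul, one_smul, ρmarg]

lemma trB_ρglob (p : ℝ) : trB (ρglob p) = ρmarg p := by
  rw [ρglob, trB_add, trB_smul, trB_smul, trB_projV_prod3, trB_projV_prod3,
    star_e0_dotProduct_e0, star_aVec_dotProduct_aVec, one_smul, one_smul, ρmarg]

lemma trA_ρglob (p : ℝ) : trA (ρglob p) = ρmarg p := by
  rw [ρglob, trA_add, trA_smul, trA_smul, trA_projV_prod3, trA_projV_prod3,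
    star_e0_dotProduct_e0, star_aVec_dotProduct_aVec, one_smul, one_smul, ρmarg]

lemma fullySepTri_ρglob {p : ℝ} (hp : 0 ≤ p) (hp' : p ≤ 1) : FullySepTri (ρglob p) := by
  refine ⟨2, ![p, 1 - p], ![e0, aVec], ![e0, aVec], ![e0, aVec], fun i => ?_, ?_⟩
  · fin_cases i <;> simpa
  · simp [Fin.sum_univ_two, ρglob]

lemma prod2_e0_e0_of_ne_zero {i : Fin 2 × Fin 2} (hi : i ≠ 0) : prod2 e0 e0 i = 0 := by
  obtain ⟨a, b⟩ := i
  simp only [ne_eq, Prod.mk_eq_zero, not_and_or] at hi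
  rcases hi with ha | hb <;> simp [prod2, e0, *]

lemma diffForm_ρmarg (p : ℝ) {i j : Fin 2 × Fin 2} (hi : i ≠ 0) (hj : j ≠ 0) :
    diffForm (ρmarg p) i j = 0 := by
  have ha : prod2 aVec aVec i = prod2 aVec aVec j := rfl
  simp only [diffForm, ρmarg, Matrix.add_apply, Matrix.smul_apply, projV,
    prod2_e0_e0_of_ne_zero hi, prod2_e0_e0_of_ne_zero hj, ha]
  ring

lemma apply_eq_apply_one_of_trC_trA {τ : Tri 2 2 2} (hτ : τ.PosSemidef) {p : ℝ}
    (hC : trC τ = ρmarg p) (hA : trA τ = ρmarg p) (x : Fin 2 × Fin 2 × Fin 2)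
    {y : Fin 2 × Fin 2 × Fin 2} (hy : y ≠ 0) : τ x y = τ x 1 := by
  have hC' {i j : Fin 2 × Fin 2} (hi : i ≠ 0) (hj : j ≠ 0) (c : Fin 2) :
      τ x (i.1, i.2, c) = τ x (j.1, j.2, c) :=
    hτ.apply_eq_of_diffForm_trC_eq_zero (hC ▸ diffForm_ρmarg p hi hj) c x
  have hA' {i j : Fin 2 × Fin 2} (hi : i ≠ 0) (hj : j ≠ 0) (a : Fin 2) :
      τ x (a, i.1, i.2) = τ x (a, j.1, j.2) :=
    hτ.apply_eq_of_diffForm_trA_eq_zero (hA ▸ diffForm_ρmarg p hi hj) a x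
  obtain ⟨a, b, c⟩ := y
  by_cases hab : (a, b) = 0
  · obtain ⟨rfl, rfl⟩ : a = 0 ∧ b = 0 := Prod.mk_eq_zero.mp hab
    have hc : ((0 : Fin 2), c) ≠ 0 := by simpa [Prod.mk_eq_zero] using hy
    calc τ x (0, 0, c) = τ x (0, 1, 1) := hA' (j := (1, 1)) hc (by decide) 0
      _ = τ x 1 := hC' (i := (0, 1)) (j := (1, 1)) (by decide) (by decide) 1
  · calc τ x (a, b, c) = τ x (1, 1, c) := hC' (j := (1, 1)) hab (by decide) c
      _ = τ x 1 := hA' (i := (1, c)) (j := (1, 1)) (by simp) (by decide) 1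

lemma apply_eq_one_apply_of_trC_trA {τ : Tri 2 2 2} (hτ : τ.PosSemidef) {p : ℝ}
    (hC : trC τ = ρmarg p) (hA : trA τ = ρmarg p) {x : Fin 2 × Fin 2 × Fin 2} (hx : x ≠ 0)
    (y : Fin 2 × Fin 2 × Fin 2) : τ x y = τ 1 y := by
  rw [← hτ.1.apply x y, ← hτ.1.apply 1 y, apply_eq_apply_one_of_trC_trA hτ hC hA y hx]

def ConstOffZero (M : Tri 2 2 2) : Prop :=
  ∀ x y, (x ≠ 0 → M x y = M 1 y) ∧ (y ≠ 0 → M x y = M x 1)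

lemma constOffZero_of_trC_trA {τ : Tri 2 2 2} (hτ : τ.PosSemidef) {p : ℝ}
    (hC : trC τ = ρmarg p) (hA : trA τ = ρmarg p) : ConstOffZero τ := fun x y =>
  ⟨fun hx => apply_eq_one_apply_of_trC_trA hτ hC hA hx y,
    fun hy => apply_eq_apply_one_of_trC_trA hτ hC hA x hy⟩

lemma ConstOffZero.sub {M N : Tri 2 2 2} (hM : ConstOffZero M) (hN : ConstOffZero N) :
    ConstOffZero (M - N) := fun x y =>
  ⟨fun hx => by simp [(hM x y).1 hx, (hN x y).1 hx],
    fun hy => by simp [(hM x y).2 hy, (hN x y).2 hy]⟩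

lemma ConstOffZero.apply_eq {M : Tri 2 2 2} (hM : ConstOffZero M) (x y : Fin 2 × Fin 2 × Fin 2) :
    M x y = M (if x = 0 then 0 else 1) (if y = 0 then 0 else 1) := by
  split_ifs with hx hy hy
  · rw [hx, hy]
  · rw [hx, (hM 0 y).2 hy]
  · rw [hy, (hM x 0).1 hx]
  · rw [(hM x y).1 hx, (hM 1 y).2 hy]

lemma ConstOffZero.eq_zero_of_trC_eq_zero {M : Tri 2 2 2} (hM : ConstOffZero M)
    (h : trC M = 0) : M = 0 := by
  have key (i j : Fin 2 × Fin 2) :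
      M (i.1, i.2, 0) (j.1, j.2, 0) + M (i.1, i.2, 1) (j.1, j.2, 1) = 0 := by
    simpa [trC, Fin.sum_univ_two] using congrFun (congrFun h i) j
  have e11 : M (1, 1, 0) (1, 1, 0) + M (1, 1, 1) (1, 1, 1) = 0 := key 1 1
  have e01 : M (0, 0, 0) (1, 1, 0) + M (0, 0, 1) (1, 1, 1) = 0 := key 0 1
  have e10 : M (1, 1, 0) (0, 0, 0) + M (1, 1, 1) (0, 0, 1) = 0 := key 1 0
  have e00 : M (0, 0, 0) (0, 0, 0) + M (0, 0, 1) (0, 0, 1) = 0 := key 0 0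
  rw [hM.apply_eq (1, 1, 0), hM.apply_eq (1, 1, 1)] at e11 e10
  rw [hM.apply_eq (0, 0, 0), hM.apply_eq (0, 0, 1)] at e01 e00
  simp only [Prod.mk_eq_zero, one_ne_zero, and_false, false_and, if_false, if_true,
    and_self] at e11 e10 e01 e00
  have h11 : M 1 1 = 0 := by linear_combination e11 / 2
  have h10 : M 1 0 = 0 := by linear_combination e10 - e11 / 2
  have h01 : M 0 1 = 0 := by linear_combination e01 - e11 / 2
  have h00 : M 0 0 = 0 := by linear_combination e00 - e11 / 2
  ext x y
  rw [hM.apply_eq]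
  split_ifs <;> assumption

lemma eq_ρglob_of_trC_trA {τ : Tri 2 2 2} (hτ : τ.PosSemidef) {p : ℝ} (hp : 0 ≤ p) (hp' : p ≤ 1)
    (hC : trC τ = ρmarg p) (hA : trA τ = ρmarg p) : τ = ρglob p := by
  have hglob := constOffZero_of_trC_trA (posSemidef_ρglob hp hp') (trC_ρglob p) (trA_ρglob p)
  refine sub_eq_zero.mp (((constOffZero_of_trC_trA hτ hC hA).sub hglob).eq_zero_of_trC_eq_zero ?_)
  rw [trC_sub, hC, trC_ρglob, sub_self]

/-- the separable marginals ρmarg p are compatible only with the fully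
separable state ρglob p. -/
theorem stmt_19 (p : ℝ) (hp : 0 < p) (hp' : p < 1) :
    IsDensity (ρglob p) ∧
    trC (ρglob p) = ρmarg p ∧ trB (ρglob p) = ρmarg p ∧ trA (ρglob p) = ρmarg p ∧
    FullySepTri (ρglob p) ∧
    ∀ τ : Tri 2 2 2, IsDensity τ →
      trC τ = ρmarg p → trB τ = ρmarg p → trA τ = ρmarg p → τ = ρglob p :=
  ⟨⟨posSemidef_ρglob hp.le hp'.le, trace_ρglob p⟩, trC_ρglob p, trB_ρglob p, trA_ρglob p,
    fullySepTri_ρglob hp.le hp'.le,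
    fun _ hτ hC _ hA => eq_ρglob_of_trC_trA hτ.1 hp.le hp'.le hC hA⟩
end QMarginal
end
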